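/- arXiv:1901.00490 — 2 statements merged into one kernel-verified Lean document; each statement's English description precedes it below -/
import Mathlib

section
/- Let U be a Hopf algebra over a field k, let ℛ⁽⁰⁾ be an algebra automorphism of U⊗U and R⁽¹⁾ ∈ U⊗U an invertible element satisfying conditions (RR1)–(RR5): Ad(R⁽¹⁾)∘ℛ⁽⁰⁾∘Δ = Δ^op; (Δ⊗id_U)∘ℛ⁽⁰⁾ = ℛ⁽⁰⁾₁₃∘ℛ⁽⁰⁾₂₃∘(Δ⊗id_U); (id_U⊗Δ)∘ℛ⁽⁰⁾ = ℛ⁽⁰⁾₁₃∘ℛ⁽⁰⁾₁₂∘(id_U⊗Δ); (Δ⊗id_U)(R⁽¹⁾) = R⁽¹⁾₁₃·ℛ⁽⁰⁾₁₃(R⁽¹⁾₂₃); (id_U⊗Δ)(R⁽¹⁾) = R⁽¹⁾₁₃·ℛ⁽⁰⁾₁₃(R⁽¹⁾₁₂). Let B be a right U-comodule algebra with coaction Δ_B : B → B⊗U, let 𝒦⁽⁰⁾ be an algebra automorphism of B⊗U and K⁽¹⁾ ∈ B⊗U an invertible element satisfying: (wqKK1) Ad(K⁽¹⁾)∘𝒦⁽⁰⁾∘Δ_B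 = Δ_B; (wqKK2) (Δ_B⊗id_U)∘𝒦⁽⁰⁾ = ℛ⁽⁰⁾₃₂∘𝒦⁽⁰⁾₁₃∘ℛ⁽⁰⁾₂₃∘(Δ_B⊗id_U); (wqKK3) (id_B⊗Δ)∘𝒦⁽⁰⁾ = 𝒦⁽⁰⁾₁₂∘ℛ⁽⁰⁾₃₂∘𝒦⁽⁰⁾₁₃∘Ad(R⁽¹⁾₂₃)∘ℛ⁽⁰⁾₂₃∘(id_B⊗Δ); (wqKK4) (Δ_B⊗id_U)(K⁽¹⁾) = R⁽¹⁾₃₂·ℛ⁽⁰⁾₃₂(K⁽¹⁾₁₃)·ℛ⁽⁰⁾₃₂(𝒦⁽⁰⁾₁₃(R⁽¹⁾₂₃)); (wqKK5) (id_B⊗Δ)(K⁽¹⁾) = K⁽¹⁾₁₂·𝒦⁽⁰⁾₁₂(R⁽¹⁾₃₂)·𝒦⁽⁰⁾₁₂(ℛ⁽⁰⁾₃₂(K⁽¹⁾₁₃)). Then (B, Δ_B, Ad(K⁽¹⁾)∘𝒦⁽⁰⁾) is a weakly quasitriangular right comodule algebra over the weakly quasitriangular Hopf algebra (U, Ad(R⁽¹⁾)∘ℛ⁽⁰⁾),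 i.e. 𝒦 = Ad(K⁽¹⁾)∘𝒦⁽⁰⁾ satisfies (K1), (K2) and (K3) with ℛ = Ad(R⁽¹⁾)∘ℛ⁽⁰⁾. -/
/-!
Legs of an inner automorphism are inner: `(Ad u)₂₃ = Ad u₂₃` and similarly for the other legs,
and an algebra map `f` satisfies `f ∘ Ad u = Ad (f u) ∘ f`. Hence in (K2), and in (K3) with its
factors in the order `𝒦₁₂ ℛ₃₂ 𝒦₁₃ ℛ₂₃`, the right-hand side is the corresponding expression in
`ℛ⁽⁰⁾, 𝒦⁽⁰⁾` conjugated by a product of three units, which (wqKK4), resp. (wqKK5), identifies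
with the image of `K⁽¹⁾`. The order of (K3) is then recovered from (RR1), i.e. (wq1) for `ℛ`: on the image of
`id_B ⊗ Δ` the automorphism `ℛ₂₃` acts as the flip `τ₂₃`, and conjugating by `τ₂₃` exchanges the
legs `12 ↔ 13` and `23 ↔ 32`.
-/

open TensorProduct

noncomputable section

variable (k : Type*) [Field k]

/-- Conjugation by a unit, as a `k`-algebra automorphism. -/
def adUnit {A : Type*} [Ring A] [Algebra k A] (u : Aˣ) : A ≃ₐ[k] A where
  toFun a := ↑u * a * ↑u⁻¹
  invFun a := ↑u⁻¹ * a * ↑u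
  left_inv a := by simp [mul_assoc]
  right_inv a := by simp [mul_assoc]
  map_add' a b := by noncomm_ring
  map_mul' a b := by
    show ↑u * (a * b) * ↑u⁻¹ = ↑u * a * ↑u⁻¹ * (↑u * b * ↑u⁻¹)
    simp [mul_assoc]
  commutes' r := by
    show ↑u * algebraMap k A r * ↑u⁻¹ = algebraMap k A r
    rw [← Algebra.commutes r (↑u : A), mul_assoc, Units.mul_inv, mul_one]

variable (U : Type*) [Ring U] [HopfAlgebra k U]

/-- The coproduct `Δ : U → U ⊗ U` as an algebra homomorphism. -/
abbrev Δ : U →ₐ[k] U ⊗[k] U := Bialgebra.comulAlgHom k U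

/-- The opposite coproduct `Δᵒᵖ = σ ∘ Δ`. -/
def Δop : U →ₐ[k] U ⊗[k] U :=
  (Algebra.TensorProduct.comm k U U).toAlgHom.comp (Bialgebra.comulAlgHom k U)

/-- The flip of the last two tensor factors of `(U ⊗ U) ⊗ U`. -/
def σ23 : ((U ⊗[k] U) ⊗[k] U) ≃ₐ[k] ((U ⊗[k] U) ⊗[k] U) :=
  (Algebra.TensorProduct.assoc k k k U U U).trans <|
    (Algebra.TensorProduct.congr AlgEquiv.refl (Algebra.TensorProduct.comm k U U)).trans
      (Algebra.TensorProduct.assoc k k k U U U).symm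

variable {k U}

/-- `F₁₂ = F ⊗ id` on `(U ⊗ U) ⊗ U`. -/
def leg12 (F : (U ⊗[k] U) ≃ₐ[k] (U ⊗[k] U)) :
    ((U ⊗[k] U) ⊗[k] U) ≃ₐ[k] ((U ⊗[k] U) ⊗[k] U) :=
  Algebra.TensorProduct.congr F AlgEquiv.refl

/-- `F₂₃ = id ⊗ F` on `(U ⊗ U) ⊗ U` (transported along the associator). -/
def leg23 (F : (U ⊗[k] U) ≃ₐ[k] (U ⊗[k] U)) :
    ((U ⊗[k] U) ⊗[k] U) ≃ₐ[k] ((U ⊗[k] U) ⊗[k] U) :=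
  (Algebra.TensorProduct.assoc k k k U U U).trans <|
    (Algebra.TensorProduct.congr AlgEquiv.refl F).trans
      (Algebra.TensorProduct.assoc k k k U U U).symm

/-- `F₁₃ = σ₂₃ ∘ F₁₂ ∘ σ₂₃` on `(U ⊗ U) ⊗ U`. -/
def leg13 (F : (U ⊗[k] U) ≃ₐ[k] (U ⊗[k] U)) :
    ((U ⊗[k] U) ⊗[k] U) ≃ₐ[k] ((U ⊗[k] U) ⊗[k] U) :=
  (σ23 k U).trans ((leg12 F).trans (σ23 k U))

/-- `u₁₂ = u ⊗ 1` in `(U ⊗ U) ⊗ U`. -/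
def el12 (u : U ⊗[k] U) : (U ⊗[k] U) ⊗[k] U := u ⊗ₜ[k] (1 : U)

/-- `u₂₃ = 1 ⊗ u` in `(U ⊗ U) ⊗ U`. -/
def el23 (u : U ⊗[k] U) : (U ⊗[k] U) ⊗[k] U :=
  (Algebra.TensorProduct.assoc k k k U U U).symm ((1 : U) ⊗ₜ[k] u)

/-- `u₁₃ = σ₂₃ (u₁₂)` in `(U ⊗ U) ⊗ U`. -/
def el13 (u : U ⊗[k] U) : (U ⊗[k] U) ⊗[k] U := σ23 k U (el12 u)

variable (k U)

/-- `Δ ⊗ id : U ⊗ U → (U ⊗ U) ⊗ U`. -/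
def ΔId : (U ⊗[k] U) →ₐ[k] ((U ⊗[k] U) ⊗[k] U) :=
  Algebra.TensorProduct.map (Bialgebra.comulAlgHom k U) (AlgHom.id k U)

/-- `id ⊗ Δ : U ⊗ U → (U ⊗ U) ⊗ U` (transported along the associator). -/
def IdΔ : (U ⊗[k] U) →ₐ[k] ((U ⊗[k] U) ⊗[k] U) :=
  (Algebra.TensorProduct.assoc k k k U U U).symm.toAlgHom.comp
    (Algebra.TensorProduct.map (AlgHom.id k U) (Bialgebra.comulAlgHom k U))

end

noncomputable section

variable (k : Type*) [Field k] (U : Type*) [Ring U] [HopfAlgebra k U]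
variable (B : Type*) [Ring B] [Algebra k B]

/-- The flip of the two `U`-factors of `(B ⊗ U) ⊗ U`. -/
def τ23 : ((B ⊗[k] U) ⊗[k] U) ≃ₐ[k] ((B ⊗[k] U) ⊗[k] U) :=
  (Algebra.TensorProduct.assoc k k k B U U).trans <|
    (Algebra.TensorProduct.congr AlgEquiv.refl (Algebra.TensorProduct.comm k U U)).trans
      (Algebra.TensorProduct.assoc k k k B U U).symm

variable {k U B}

/-- `G₁₂ = G ⊗ id` on `(B ⊗ U) ⊗ U`. -/
def legB12 (G : (B ⊗[k] U) ≃ₐ[k] (B ⊗[k] U)) :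
    ((B ⊗[k] U) ⊗[k] U) ≃ₐ[k] ((B ⊗[k] U) ⊗[k] U) :=
  Algebra.TensorProduct.congr G AlgEquiv.refl

/-- `G₁₃ = τ₂₃ ∘ G₁₂ ∘ τ₂₃` on `(B ⊗ U) ⊗ U`. -/
def legB13 (G : (B ⊗[k] U) ≃ₐ[k] (B ⊗[k] U)) :
    ((B ⊗[k] U) ⊗[k] U) ≃ₐ[k] ((B ⊗[k] U) ⊗[k] U) :=
  (τ23 k U B).trans ((legB12 G).trans (τ23 k U B))

/-- `F₂₃ = id_B ⊗ F` on `(B ⊗ U) ⊗ U` (transported along the associator). -/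
def legU23 (F : (U ⊗[k] U) ≃ₐ[k] (U ⊗[k] U)) :
    ((B ⊗[k] U) ⊗[k] U) ≃ₐ[k] ((B ⊗[k] U) ⊗[k] U) :=
  (Algebra.TensorProduct.assoc k k k B U U).trans <|
    (Algebra.TensorProduct.congr AlgEquiv.refl F).trans
      (Algebra.TensorProduct.assoc k k k B U U).symm

/-- `F₃₂ = τ₂₃ ∘ F₂₃ ∘ τ₂₃` on `(B ⊗ U) ⊗ U`. -/
def legU32 (F : (U ⊗[k] U) ≃ₐ[k] (U ⊗[k] U)) :
    ((B ⊗[k] U) ⊗[k] U) ≃ₐ[k] ((B ⊗[k] U) ⊗[k] U) :=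
  (τ23 k U B).trans ((legU23 F).trans (τ23 k U B))

/-- `v₁₂ = v ⊗ 1` in `(B ⊗ U) ⊗ U`. -/
def elB12 (v : B ⊗[k] U) : (B ⊗[k] U) ⊗[k] U := v ⊗ₜ[k] (1 : U)

/-- `v₁₃ = τ₂₃ (v₁₂)` in `(B ⊗ U) ⊗ U`. -/
def elB13 (v : B ⊗[k] U) : (B ⊗[k] U) ⊗[k] U := τ23 k U B (elB12 v)

/-- `u₂₃ = 1_B ⊗ u` in `(B ⊗ U) ⊗ U`. -/
def elU23 (u : U ⊗[k] U) : (B ⊗[k] U) ⊗[k] U :=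
  (Algebra.TensorProduct.assoc k k k B U U).symm ((1 : B) ⊗ₜ[k] u)

/-- `u₃₂ = τ₂₃ (u₂₃)` in `(B ⊗ U) ⊗ U`. -/
def elU32 (u : U ⊗[k] U) : (B ⊗[k] U) ⊗[k] U := τ23 k U B (elU23 u)

/-- `Δ_B ⊗ id : B ⊗ U → (B ⊗ U) ⊗ U`. -/
def ΔBId (ΔB : B →ₐ[k] B ⊗[k] U) : (B ⊗[k] U) →ₐ[k] ((B ⊗[k] U) ⊗[k] U) :=
  Algebra.TensorProduct.map ΔB (AlgHom.id k U)

variable (k U B) in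
/-- `id_B ⊗ Δ : B ⊗ U → (B ⊗ U) ⊗ U` (transported along the associator). -/
def IdBΔ : (B ⊗[k] U) →ₐ[k] ((B ⊗[k] U) ⊗[k] U) :=
  (Algebra.TensorProduct.assoc k k k B U U).symm.toAlgHom.comp
    (Algebra.TensorProduct.map (AlgHom.id k B) (Bialgebra.comulAlgHom k U))

/-- `B` together with `Δ_B : B →ₐ B ⊗ U` is a right `U`-comodule algebra:
`Δ_B` is coassociative and counital. -/
def IsComoduleAlgebra (ΔB : B →ₐ[k] B ⊗[k] U) : Prop :=
  (∀ b : B, ΔBId ΔB (ΔB b) = IdBΔ k U B (ΔB b)) ∧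
  (∀ b : B, Algebra.TensorProduct.rid k k B
      (Algebra.TensorProduct.map (AlgHom.id k B) (Bialgebra.counitAlgHom k U) (ΔB b)) = b)

end

open Algebra.TensorProduct (includeLeft includeRight)

section Conjugation

variable {k : Type*} [Field k] {A C : Type*} [Ring A] [Algebra k A] [Ring C] [Algebra k C]

theorem adUnit_apply (u : Aˣ) (a : A) : adUnit k u a = ↑u * a * ↑u⁻¹ := rfl

theorem adUnit_mul (u v : Aˣ) (a : A) : adUnit k (u * v) a = adUnit k u (adUnit k v a) := by
  simp only [adUnit_apply, Units.val_mul, mul_inv_rev, mul_assoc]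

theorem map_adUnit {F : Type*} [FunLike F A C] [AlgHomClass F k A C] (f : F) (u : Aˣ) (a : A) :
    f (adUnit k u a) = adUnit k (Units.map (f : A →* C) u) (f a) := by
  simp only [adUnit_apply, map_mul, Units.coe_map, Units.coe_map_inv, MonoidHom.coe_coe]

theorem congr_refl_trans_adUnit (F : C ≃ₐ[k] C) (u : Cˣ) (x : A ⊗[k] C) :
    Algebra.TensorProduct.congr (AlgEquiv.refl : A ≃ₐ[k] A) (F.trans (adUnit k u)) x =
      adUnit k (Units.map (includeRight : C →ₐ[k] A ⊗[k] C) u)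
        (Algebra.TensorProduct.congr (AlgEquiv.refl : A ≃ₐ[k] A) F x) := by
  induction x using TensorProduct.induction_on with
  | zero => simp only [map_zero]
  | tmul a c =>
    simp [adUnit_apply, Algebra.TensorProduct.tmul_mul_tmul]
  | add x y hx hy => simp only [map_add, hx, hy]

theorem congr_trans_adUnit_refl (F : A ≃ₐ[k] A) (u : Aˣ) (x : A ⊗[k] C) :
    Algebra.TensorProduct.congr (F.trans (adUnit k u)) (AlgEquiv.refl : C ≃ₐ[k] C) x =
      adUnit k (Units.map (includeLeft : A →ₐ[k] A ⊗[k] C) u)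
        (Algebra.TensorProduct.congr F (AlgEquiv.refl : C ≃ₐ[k] C) x) := by
  induction x using TensorProduct.induction_on with
  | zero => simp only [map_zero]
  | tmul a c =>
    simp [adUnit_apply, Algebra.TensorProduct.tmul_mul_tmul]
  | add x y hx hy => simp only [map_add, hx, hy]

end Conjugation

section Legs

variable {k : Type*} [Field k] {U : Type*} [Ring U] [HopfAlgebra k U]
  {B : Type*} [Ring B] [Algebra k B]

/-- The legs of a unit, as units of `(B ⊗ U) ⊗ U`, so that conjugation by them is `adUnit`. -/
def unitU23 (u : (U ⊗[k] U)ˣ) : ((B ⊗[k] U) ⊗[k] U)ˣ :=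
  Units.map ((Algebra.TensorProduct.assoc k k k B U U).symm.toAlgHom.comp includeRight :
    U ⊗[k] U →* (B ⊗[k] U) ⊗[k] U) u

def unitU32 (u : (U ⊗[k] U)ˣ) : ((B ⊗[k] U) ⊗[k] U)ˣ :=
  Units.map (τ23 k U B : (B ⊗[k] U) ⊗[k] U →* (B ⊗[k] U) ⊗[k] U) (unitU23 u)

def unitB12 (v : (B ⊗[k] U)ˣ) : ((B ⊗[k] U) ⊗[k] U)ˣ :=
  Units.map (includeLeft : B ⊗[k] U →ₐ[k] (B ⊗[k] U) ⊗[k] U) v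

def unitB13 (v : (B ⊗[k] U)ˣ) : ((B ⊗[k] U) ⊗[k] U)ˣ :=
  Units.map (τ23 k U B : (B ⊗[k] U) ⊗[k] U →* (B ⊗[k] U) ⊗[k] U) (unitB12 v)

@[simp] theorem val_unitU23 (u : (U ⊗[k] U)ˣ) :
    ↑(unitU23 (B := B) u) = (elU23 ↑u : (B ⊗[k] U) ⊗[k] U) := rfl

@[simp] theorem val_unitU32 (u : (U ⊗[k] U)ˣ) :
    ↑(unitU32 (B := B) u) = (elU32 ↑u : (B ⊗[k] U) ⊗[k] U) := rfl

@[simp] theorem val_unitB12 (v : (B ⊗[k] U)ˣ) : (unitB12 v : (B ⊗[k] U) ⊗[k] U) = elB12 ↑v := rfl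

@[simp] theorem val_unitB13 (v : (B ⊗[k] U)ˣ) : (unitB13 v : (B ⊗[k] U) ⊗[k] U) = elB13 ↑v := rfl

theorem legU23_trans_adUnit (F : (U ⊗[k] U) ≃ₐ[k] (U ⊗[k] U)) (u : (U ⊗[k] U)ˣ)
    (y : (B ⊗[k] U) ⊗[k] U) :
    legU23 (F.trans (adUnit k u)) y = adUnit k (unitU23 u) (legU23 F y) := by
  simp only [legU23, AlgEquiv.trans_apply, congr_refl_trans_adUnit, map_adUnit]
  rfl

theorem legU32_trans_adUnit (F : (U ⊗[k] U) ≃ₐ[k] (U ⊗[k] U)) (u : (U ⊗[k] U)ˣ)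
    (y : (B ⊗[k] U) ⊗[k] U) :
    legU32 (F.trans (adUnit k u)) y = adUnit k (unitU32 u) (legU32 F y) := by
  simp only [legU32, AlgEquiv.trans_apply, legU23_trans_adUnit, map_adUnit]
  rfl

theorem legB12_trans_adUnit (G : (B ⊗[k] U) ≃ₐ[k] (B ⊗[k] U)) (v : (B ⊗[k] U)ˣ)
    (y : (B ⊗[k] U) ⊗[k] U) :
    legB12 (G.trans (adUnit k v)) y = adUnit k (unitB12 v) (legB12 G y) :=
  congr_trans_adUnit_refl G v y

theorem legB13_trans_adUnit (G : (B ⊗[k] U) ≃ₐ[k] (B ⊗[k] U)) (v : (B ⊗[k] U)ˣ)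
    (y : (B ⊗[k] U) ⊗[k] U) :
    legB13 (G.trans (adUnit k v)) y = adUnit k (unitB13 v) (legB13 G y) := by
  simp only [legB13, AlgEquiv.trans_apply, legB12_trans_adUnit, map_adUnit]
  rfl

theorem τ23_τ23 (y : (B ⊗[k] U) ⊗[k] U) : τ23 k U B (τ23 k U B y) = y := by
  induction y using TensorProduct.induction_on with
  | zero => simp only [map_zero]
  | tmul p w =>
    induction p using TensorProduct.induction_on with
    | zero => simp only [TensorProduct.zero_tmul, map_zero]
    | tmul b u => rfl
    | add p q hp hq => simp only [TensorProduct.add_tmul, map_add, hp, hq]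
  | add x y hx hy => simp only [map_add, hx, hy]

theorem adUnit_legU32_legB13_legU23 (R0 : (U ⊗[k] U) ≃ₐ[k] (U ⊗[k] U)) (R1 : (U ⊗[k] U)ˣ)
    (K0 : (B ⊗[k] U) ≃ₐ[k] (B ⊗[k] U)) (K1 : (B ⊗[k] U)ˣ) (w : ((B ⊗[k] U) ⊗[k] U)ˣ)
    (hw : (w : (B ⊗[k] U) ⊗[k] U) =
      elU32 ↑R1 * legU32 R0 (elB13 ↑K1) * legU32 R0 (legB13 K0 (elU23 ↑R1)))
    (y : (B ⊗[k] U) ⊗[k] U) :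
    adUnit k w (legU32 R0 (legB13 K0 (legU23 R0 y))) =
      legU32 (R0.trans (adUnit k R1))
        (legB13 (K0.trans (adUnit k K1)) (legU23 (R0.trans (adUnit k R1)) y)) := by
  rw [legU23_trans_adUnit, legB13_trans_adUnit, map_adUnit (legB13 K0), legU32_trans_adUnit,
    map_adUnit (legU32 R0), map_adUnit (legU32 R0), ← adUnit_mul, ← adUnit_mul]
  congr 2
  ext
  simp [hw, mul_assoc]

theorem adUnit_legB12_legU32_legB13 (R0 : (U ⊗[k] U) ≃ₐ[k] (U ⊗[k] U)) (R1 : (U ⊗[k] U)ˣ)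
    (K0 : (B ⊗[k] U) ≃ₐ[k] (B ⊗[k] U)) (K1 : (B ⊗[k] U)ˣ) (w : ((B ⊗[k] U) ⊗[k] U)ˣ)
    (hw : (w : (B ⊗[k] U) ⊗[k] U) =
      elB12 ↑K1 * legB12 K0 (elU32 ↑R1) * legB12 K0 (legU32 R0 (elB13 ↑K1)))
    (y : (B ⊗[k] U) ⊗[k] U) :
    adUnit k w (legB12 K0 (legU32 R0 (legB13 K0 y))) =
      legB12 (K0.trans (adUnit k K1))
        (legU32 (R0.trans (adUnit k R1)) (legB13 (K0.trans (adUnit k K1)) y)) := by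
  rw [legB13_trans_adUnit, legU32_trans_adUnit, map_adUnit (legU32 R0), legB12_trans_adUnit,
    map_adUnit (legB12 K0), map_adUnit (legB12 K0), ← adUnit_mul, ← adUnit_mul]
  congr 2
  ext
  simp [hw, mul_assoc]

theorem legU23_IdBΔ_of_comul_eq_op {R : (U ⊗[k] U) ≃ₐ[k] (U ⊗[k] U)}
    (hR : ∀ u : U, R (Bialgebra.comulAlgHom k U u) = Δop k U u) (v : B ⊗[k] U) :
    legU23 R (IdBΔ k U B v) = τ23 k U B (IdBΔ k U B v) := by
  induction v using TensorProduct.induction_on with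
  | zero => simp only [map_zero]
  | tmul b u =>
    have hIdBΔ : IdBΔ k U B (b ⊗ₜ[k] u) =
        (Algebra.TensorProduct.assoc k k k B U U).symm
          (b ⊗ₜ[k] Bialgebra.comulAlgHom k U u) := rfl
    simp only [hIdBΔ, legU23, τ23, AlgEquiv.trans_apply, AlgEquiv.apply_symm_apply,
      Algebra.TensorProduct.congr_apply, Algebra.TensorProduct.map_tmul, AlgEquiv.coe_toAlgHom, hR]
    rfl
  | add x y hx hy => simp only [map_add, hx, hy]

theorem IdBΔ_apply_eq_legU32_of_eq_legB12 {R : (U ⊗[k] U) ≃ₐ[k] (U ⊗[k] U)}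
    {K : (B ⊗[k] U) ≃ₐ[k] (B ⊗[k] U)}
    (hR : ∀ u : U, R (Bialgebra.comulAlgHom k U u) = Δop k U u)
    (hK : ∀ x, IdBΔ k U B (K x) = legB12 K (legU32 R (legB13 K (legU23 R (IdBΔ k U B x)))))
    (x : B ⊗[k] U) :
    IdBΔ k U B (K x) = legU32 R (legB13 K (legU23 R (legB12 K (IdBΔ k U B x)))) :=
  calc IdBΔ k U B (K x) = τ23 k U B (legU23 R (IdBΔ k U B (K x))) := by
        rw [legU23_IdBΔ_of_comul_eq_op hR, τ23_τ23]
    _ = τ23 k U B (legU23 R (legB12 K (legU32 R (legB13 K (τ23 k U B (IdBΔ k U B x)))))) := by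
        rw [hK, legU23_IdBΔ_of_comul_eq_op hR]
    _ = legU32 R (legB13 K (legU23 R (legB12 K (IdBΔ k U B x)))) := by
        simp only [legU32, legB13, AlgEquiv.trans_apply, τ23_τ23]

end Legs

theorem weaklyQuasitriangular_comodule_of_KK_general
    {k : Type*} [Field k] {U : Type*} [Ring U] [HopfAlgebra k U]
    {B : Type*} [Ring B] [Algebra k B]
    (ΔB : B →ₐ[k] B ⊗[k] U)
    (R0 : (U ⊗[k] U) ≃ₐ[k] (U ⊗[k] U)) (R1 : (U ⊗[k] U)ˣ)
    (RR1 : ∀ u : U, (R1 : U ⊗[k] U) * R0 (Bialgebra.comulAlgHom k U u) * ↑R1⁻¹ = Δop k U u)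
    (K0 : (B ⊗[k] U) ≃ₐ[k] (B ⊗[k] U)) (K1 : (B ⊗[k] U)ˣ)
    (wqKK1 : ∀ b : B, (K1 : B ⊗[k] U) * K0 (ΔB b) * ↑K1⁻¹ = ΔB b)
    (wqKK2 : ∀ x : B ⊗[k] U,
      ΔBId ΔB (K0 x) = legU32 R0 (legB13 K0 (legU23 R0 (ΔBId ΔB x))))
    (wqKK3 : ∀ x : B ⊗[k] U,
      IdBΔ k U B (K0 x) = legB12 K0 (legU32 R0 (legB13 K0
        (elU23 (R1 : U ⊗[k] U) * legU23 R0 (IdBΔ k U B x) * elU23 ((R1⁻¹ : (U ⊗[k] U)ˣ) : U ⊗[k] U)))))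
    (wqKK4 : ΔBId ΔB (K1 : B ⊗[k] U) =
      elU32 (R1 : U ⊗[k] U) * legU32 R0 (elB13 (K1 : B ⊗[k] U)) *
        legU32 R0 (legB13 K0 (elU23 (R1 : U ⊗[k] U))))
    (wqKK5 : IdBΔ k U B (K1 : B ⊗[k] U) =
      elB12 (K1 : B ⊗[k] U) * legB12 K0 (elU32 (R1 : U ⊗[k] U)) *
        legB12 K0 (legU32 R0 (elB13 (K1 : B ⊗[k] U)))) :
    (∀ b : B, (K0.trans (adUnit k K1)) (ΔB b) = ΔB b) ∧
    (∀ x : B ⊗[k] U, ΔBId ΔB ((K0.trans (adUnit k K1)) x) =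
      legU32 (R0.trans (adUnit k R1)) (legB13 (K0.trans (adUnit k K1))
        (legU23 (R0.trans (adUnit k R1)) (ΔBId ΔB x)))) ∧
    (∀ x : B ⊗[k] U, IdBΔ k U B ((K0.trans (adUnit k K1)) x) =
      legU32 (R0.trans (adUnit k R1)) (legB13 (K0.trans (adUnit k K1))
        (legU23 (R0.trans (adUnit k R1)) (legB12 (K0.trans (adUnit k K1)) (IdBΔ k U B x))))) := by
  refine ⟨wqKK1, fun x => ?_, IdBΔ_apply_eq_legU32_of_eq_legB12 (R := R0.trans (adUnit k R1))
    (K := K0.trans (adUnit k K1)) RR1 fun x => ?_⟩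
  · rw [AlgEquiv.trans_apply, map_adUnit, wqKK2]
    exact adUnit_legU32_legB13_legU23 R0 R1 K0 K1 _ (by simpa using wqKK4) _
  · have hR23 : ∀ y : (B ⊗[k] U) ⊗[k] U, legU23 (R0.trans (adUnit k R1)) y =
        elU23 (R1 : U ⊗[k] U) * legU23 R0 y * elU23 ((R1⁻¹ : (U ⊗[k] U)ˣ) : U ⊗[k] U) :=
      legU23_trans_adUnit R0 R1
    rw [AlgEquiv.trans_apply, map_adUnit, wqKK3, ← hR23]
    exact adUnit_legB12_legU32_legB13 R0 R1 K0 K1 _ (by simpa using wqKK5) _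

/-- Lemma `lem:wq-KK`: given data `(ℛ⁽⁰⁾, R⁽¹⁾)` satisfying (RR1)–(RR5) on the Hopf
algebra `U`, and data `(𝒦⁽⁰⁾, K⁽¹⁾)` on a right `U`-comodule algebra `B` satisfying
(wqKK1)–(wqKK5), the automorphism `𝒦 = Ad(K⁽¹⁾) ∘ 𝒦⁽⁰⁾` makes `B` a weakly
quasitriangular right comodule algebra over `(U, ℛ)` with `ℛ = Ad(R⁽¹⁾) ∘ ℛ⁽⁰⁾`,
i.e. `𝒦` satisfies (K1), (K2) and (K3). -/
theorem weaklyQuasitriangular_comodule_of_KK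
    {k : Type*} [Field k] {U : Type*} [Ring U] [HopfAlgebra k U]
    {B : Type*} [Ring B] [Algebra k B]
    (ΔB : B →ₐ[k] B ⊗[k] U) (hB : IsComoduleAlgebra ΔB)
    (R0 : (U ⊗[k] U) ≃ₐ[k] (U ⊗[k] U)) (R1 : (U ⊗[k] U)ˣ)
    (RR1 : ∀ u : U, (R1 : U ⊗[k] U) * R0 (Bialgebra.comulAlgHom k U u) * ↑R1⁻¹ = Δop k U u)
    (RR2 : ∀ x : U ⊗[k] U, ΔId k U (R0 x) = leg13 R0 (leg23 R0 (ΔId k U x)))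
    (RR3 : ∀ x : U ⊗[k] U, IdΔ k U (R0 x) = leg13 R0 (leg12 R0 (IdΔ k U x)))
    (RR4 : ΔId k U (R1 : U ⊗[k] U) = el13 (R1 : U ⊗[k] U) * leg13 R0 (el23 (R1 : U ⊗[k] U)))
    (RR5 : IdΔ k U (R1 : U ⊗[k] U) = el13 (R1 : U ⊗[k] U) * leg13 R0 (el12 (R1 : U ⊗[k] U)))
    (K0 : (B ⊗[k] U) ≃ₐ[k] (B ⊗[k] U)) (K1 : (B ⊗[k] U)ˣ)
    (wqKK1 : ∀ b : B, (K1 : B ⊗[k] U) * K0 (ΔB b) * ↑K1⁻¹ = ΔB b)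
    (wqKK2 : ∀ x : B ⊗[k] U,
      ΔBId ΔB (K0 x) = legU32 R0 (legB13 K0 (legU23 R0 (ΔBId ΔB x))))
    (wqKK3 : ∀ x : B ⊗[k] U,
      IdBΔ k U B (K0 x) = legB12 K0 (legU32 R0 (legB13 K0
        (elU23 (R1 : U ⊗[k] U) * legU23 R0 (IdBΔ k U B x) * elU23 ((R1⁻¹ : (U ⊗[k] U)ˣ) : U ⊗[k] U)))))
    (wqKK4 : ΔBId ΔB (K1 : B ⊗[k] U) =
      elU32 (R1 : U ⊗[k] U) * legU32 R0 (elB13 (K1 : B ⊗[k] U)) *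
        legU32 R0 (legB13 K0 (elU23 (R1 : U ⊗[k] U))))
    (wqKK5 : IdBΔ k U B (K1 : B ⊗[k] U) =
      elB12 (K1 : B ⊗[k] U) * legB12 K0 (elU32 (R1 : U ⊗[k] U)) *
        legB12 K0 (legU32 R0 (elB13 (K1 : B ⊗[k] U)))) :
    (∀ b : B, (K0.trans (adUnit k K1)) (ΔB b) = ΔB b) ∧
    (∀ x : B ⊗[k] U, ΔBId ΔB ((K0.trans (adUnit k K1)) x) =
      legU32 (R0.trans (adUnit k R1)) (legB13 (K0.trans (adUnit k K1))
        (legU23 (R0.trans (adUnit k R1)) (ΔBId ΔB x)))) ∧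
    (∀ x : B ⊗[k] U, IdBΔ k U B ((K0.trans (adUnit k K1)) x) =
      legU32 (R0.trans (adUnit k R1)) (legB13 (K0.trans (adUnit k K1))
        (legU23 (R0.trans (adUnit k R1)) (legB12 (K0.trans (adUnit k K1)) (IdBΔ k U B x))))) :=
  weaklyQuasitriangular_comodule_of_KK_general ΔB R0 R1 RR1 K0 K1 wqKK1 wqKK2 wqKK3 wqKK4 wqKK5
end

section
/- Let k be a field, M a positive integer, q ∈ k a primitive M-th root of unity and a ∈ k. Then the Al-Salam–Carlitz I polynomial evaluated at 0 satisfies U_M^{(a)}(0;q) = (−1)^M q^{M(M−1)/2} (1 + a^M). -/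
noncomputable section

variable {R : Type*} [CommRing R]

/-- The Gaussian binomial coefficient `binom(n,k)_q`, defined by `binom(n,0)_q = 1`,
`binom(0,k+1)_q = 0` and the `q`-Pascal recursion
`binom(n+1,k+1)_q = binom(n,k)_q + q^(k+1)·binom(n,k+1)_q`. -/
def qbinom (q : R) : ℕ → ℕ → R
  | _, 0 => 1
  | 0, _ + 1 => 0
  | n + 1, k + 1 => qbinom q n k + q ^ (k + 1) * qbinom q n (k + 1)

/-- The Al-Salam–Carlitz I polynomial
`U_n^{(a)}(X;q) = Σ_{k=0}^{n} binom(n,k)_q (−a)^k q^{k(k−1)/2} ∏_{j=0}^{n−k−1}(X − q^j)`. -/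
def alSalamCarlitz (q a : R) (n : ℕ) : Polynomial R :=
  ∑ k ∈ Finset.range (n + 1),
    Polynomial.C (qbinom q n k * (-a) ^ k * q ^ (k * (k - 1) / 2)) *
      ∏ j ∈ Finset.range (n - k), (Polynomial.X - Polynomial.C (q ^ j))

end

section
variable {R : Type*} [CommRing R]

@[simp] lemma qbinom_zero_right (q : R) (n : ℕ) : qbinom q n 0 = 1 := by
  cases n <;> rfl
lemma qbinom_eq_zero_of_lt (q : R) : ∀ {n k : ℕ}, n < k → qbinom q n k = 0
  | 0, _ + 1, _ => rfl
  | n + 1, k + 1, h => by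
    rw [qbinom, qbinom_eq_zero_of_lt q (by omega), qbinom_eq_zero_of_lt q (by omega)]
    ring
@[simp] lemma qbinom_self (q : R) (n : ℕ) : qbinom q n n = 1 := by
  induction n with
  | zero => rfl
  | succ m ih =>
    rw [qbinom, ih, qbinom_eq_zero_of_lt q (Nat.lt_succ_self m)]
    ring
def qint (q : R) (d : ℕ) : R := ∑ i ∈ Finset.range d, q ^ i
def qfact (q : R) : ℕ → R
  | 0 => 1
  | n + 1 => qfact q n * qint q (n + 1)
lemma qint_add (q : R) (a b : ℕ) : qint q (a + b) = qint q a + q ^ a * qint q b := by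
  rw [qint, qint, qint, Finset.sum_range_add, Finset.mul_sum]
  simp [pow_add]
lemma qbinom_mul_qfact (q : R) : ∀ (n i : ℕ), i ≤ n →
    qbinom q n i * (qfact q i * qfact q (n - i)) = qfact q n
  | n, 0, _ => by simp [qfact]
  | 0, i + 1, h => absurd h (by omega)
  | n + 1, i + 1, h => by
    rcases eq_or_lt_of_le h with heq | hlt
    · obtain rfl : i = n := by omega
      simp [qfact]
    · have hk : i ≤ n := by omega
      have hk1 : i + 1 ≤ n := by omega
      have ih1 := qbinom_mul_qfact q n i hk
      have ih2 := qbinom_mul_qfact q n (i + 1) hk1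
      have e1 : qfact q (n - i) = qfact q (n - (i + 1)) * qint q (n - i) := by
        have hni : n - i = (n - (i + 1)) + 1 := by omega
        rw [hni, qfact, ← hni]
      have e2 : n + 1 - (i + 1) = n - i := by omega
      have e3 : qint q (n + 1) = qint q (i + 1) + q ^ (i + 1) * qint q (n - i) := by
        have : (i + 1) + (n - i) = n + 1 := by omega
        rw [← this, qint_add]
      calc qbinom q (n + 1) (i + 1) * (qfact q (i + 1) * qfact q (n + 1 - (i + 1)))
          = qint q (i + 1) * (qbinom q n i * (qfact q i * qfact q (n - i)))
            + q ^ (i + 1) * qint q (n - i) *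
              (qbinom q n (i + 1) * (qfact q (i + 1) * qfact q (n - (i + 1)))) := by
            rw [qbinom, e2, e1]; rw [show qfact q (i+1) = qfact q i * qint q (i+1) from rfl]
            ring
        _ = qint q (i + 1) * qfact q n + q ^ (i + 1) * qint q (n - i) * qfact q n := by
            rw [ih1, ih2]
        _ = qfact q (n + 1) := by rw [show qfact q (n+1) = qfact q n * qint q (n+1) from rfl, e3]; ring
end

lemma qbinom_eq_zero_of_primitive {k : Type*} [Field k] {M : ℕ} {q : k}
    (hq : q ^ M = 1) (hq' : ∀ d : ℕ, 0 < d → d < M → q ^ d ≠ 1)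
    {i : ℕ} (h0 : 0 < i) (hiM : i < M) : qbinom q M i = 0 := by
  have hq1 : q - 1 ≠ 0 := by
    rw [sub_ne_zero]
    intro h
    exact hq' 1 one_pos (by omega) (by simp [h])
  have hqint : ∀ d, 0 < d → d < M → qint q d ≠ 0 := by
    intro d hd hdM hzero
    apply hq' d hd hdM
    have := geom_sum_mul q d
    rw [show (∑ i ∈ Finset.range d, q ^ i) = qint q d from rfl, hzero, zero_mul] at this
    have := sub_eq_zero.mp this.symm
    exact this
  have hqintM : qint q M = 0 := by
    have h1 := geom_sum_mul q M
    rw [show (∑ i ∈ Finset.range M, q ^ i) = qint q M from rfl, hq, sub_self] at h1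
    exact (mul_eq_zero.mp h1).resolve_right hq1
  have hfactM : qfact q M = 0 := by
    obtain ⟨m, rfl⟩ : ∃ m, M = m + 1 := ⟨M - 1, by omega⟩
    rw [qfact, hqintM, mul_zero]
  have hfact_ne : ∀ d, d < M → qfact q d ≠ 0 := by
    intro d hd
    induction d with
    | zero => simp [qfact]
    | succ e ih =>
      rw [qfact]
      exact mul_ne_zero (ih (by omega)) (hqint (e + 1) (by omega) hd)
  have key := qbinom_mul_qfact q M i (le_of_lt hiM)
  rw [hfactM] at key
  rcases mul_eq_zero.mp key with h | h
  · exact h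
  · exact absurd h (mul_ne_zero (hfact_ne i hiM) (hfact_ne (M - i) (by omega)))

/-- If `q` is a primitive `M`-th root of unity in a field `k`, then the Al-Salam–Carlitz I
polynomial satisfies `U_M^{(a)}(0;q) = (−1)^M q^{M(M−1)/2} (1 + a^M)`. -/
theorem alSalamCarlitz_eval_zero_of_primitiveRoot {k : Type*} [Field k]
    (M : ℕ) (hM : 0 < M) (q : k) (hq : q ^ M = 1)
    (hq' : ∀ d : ℕ, 0 < d → d < M → q ^ d ≠ 1) (a : k) :
    (alSalamCarlitz q a M).eval 0 = (-1) ^ M * q ^ (M * (M - 1) / 2) * (1 + a ^ M) := by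
  have hprod : ∀ m : ℕ, ∏ j ∈ Finset.range m, (-(q ^ j)) = (-1) ^ m * q ^ (m * (m - 1) / 2) := by
    intro m
    calc ∏ j ∈ Finset.range m, (-(q ^ j))
        = ∏ j ∈ Finset.range m, (-1) * q ^ j := by
          apply Finset.prod_congr rfl; intro j _; ring
      _ = (-1) ^ m * q ^ (∑ j ∈ Finset.range m, j) := by
          rw [Finset.prod_mul_distrib, Finset.prod_const, Finset.prod_pow_eq_pow_sum,
            Finset.card_range]
      _ = (-1) ^ m * q ^ (m * (m - 1) / 2) := by
          rw [Finset.sum_range_id]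
  rw [alSalamCarlitz, Polynomial.eval_finset_sum]
  simp only [Polynomial.eval_mul, Polynomial.eval_C, Polynomial.eval_prod,
    Polynomial.eval_sub, Polynomial.eval_X, Polynomial.eval_pow, Polynomial.eval_zero, zero_sub]
  rw [Finset.sum_range_succ]
  have hrest : ∑ x ∈ Finset.range M, qbinom q M x * (-a) ^ x * q ^ (x * (x - 1) / 2) *
      ∏ j ∈ Finset.range (M - x), (-(q ^ j))
      = (-1) ^ M * q ^ (M * (M - 1) / 2) := by
    rw [Finset.sum_eq_single 0]
    · simp [hprod M]
    · intro b _ hb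
      rw [qbinom_eq_zero_of_primitive hq hq' (Nat.pos_of_ne_zero hb) (by
        exact Finset.mem_range.mp (by assumption))]
      ring
    · intro h
      exact absurd (Finset.mem_range.mpr hM) h
  rw [hrest]
  simp only [qbinom_self, Nat.sub_self, Finset.range_zero, Finset.prod_empty]
  rw [neg_pow a M]
  ring
end
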